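/- The surface gradient of the tangent director decomposes as ∇_s n = κ_n t⊗n + κ_t t⊗t + c_n ν⊗n − τ ν⊗t at every point of U; consequently div_s n = κ_t and curl_s n = −τ n − c_n t + κ_n ν, so that n·curl_s n = −τ and n × curl_s n = −c_n ν − κ_n t (whence |n × curl_s n|² = c_n² + κ_n²). -/

import Mathlib

open MeasureTheory Real Filter

noncomputable section

abbrev V3 : Type := Fin 3 → ℝ

/-- partial derivative in `u` of a field on `ℝ²`. -/
def pu {X : Type} [NormedAddCommGroup X] [NormedSpace ℝ X] (f : ℝ × ℝ → X) (p : ℝ × ℝ) : X :=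
  fderiv ℝ f p (1, 0)

/-- partial derivative in `v` of a field on `ℝ²`. -/
def pv {X : Type} [NormedAddCommGroup X] [NormedSpace ℝ X] (f : ℝ × ℝ → X) (p : ℝ × ℝ) : X :=
  fderiv ℝ f p (0, 1)

/-- Euclidean dot product on `ℝ³`. -/
def dot3 (u v : V3) : ℝ := ∑ i, u i * v i

/-- cross product on `ℝ³`. -/
def cross3 (u v : V3) : V3 :=
  ![u 1 * v 2 - u 2 * v 1, u 2 * v 0 - u 0 * v 2, u 0 * v 1 - u 1 * v 0]

/-- tensor (outer) product `u ⊗ v`. -/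
def tensor3 (u v : V3) : Matrix (Fin 3) (Fin 3) ℝ := Matrix.of fun i j => u i * v j

def Efun (φ : ℝ × ℝ → V3) (p : ℝ × ℝ) : ℝ := dot3 (pu φ p) (pu φ p)
def Gfun (φ : ℝ × ℝ → V3) (p : ℝ × ℝ) : ℝ := dot3 (pv φ p) (pv φ p)
def e1 (φ : ℝ × ℝ → V3) (p : ℝ × ℝ) : V3 := (Real.sqrt (Efun φ p))⁻¹ • pu φ p
def e2 (φ : ℝ × ℝ → V3) (p : ℝ × ℝ) : V3 := (Real.sqrt (Gfun φ p))⁻¹ • pv φ p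
def nuv (φ : ℝ × ℝ → V3) (p : ℝ × ℝ) : V3 := cross3 (e1 φ p) (e2 φ p)

/-- surface gradient of a scalar field. -/
def gradS (φ : ℝ × ℝ → V3) (f : ℝ × ℝ → ℝ) (p : ℝ × ℝ) : V3 :=
  (pu f p / Real.sqrt (Efun φ p)) • e1 φ p + (pv f p / Real.sqrt (Gfun φ p)) • e2 φ p

/-- surface gradient of a vector field. -/
def gradSv (φ : ℝ × ℝ → V3) (w : ℝ × ℝ → V3) (p : ℝ × ℝ) : Matrix (Fin 3) (Fin 3) ℝ :=
  (Real.sqrt (Efun φ p))⁻¹ • tensor3 (pu w p) (e1 φ p) +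
    (Real.sqrt (Gfun φ p))⁻¹ • tensor3 (pv w p) (e2 φ p)

/-- surface divergence. -/
def divS (φ : ℝ × ℝ → V3) (w : ℝ × ℝ → V3) (p : ℝ × ℝ) : ℝ := Matrix.trace (gradSv φ w p)

/-- the axial vector `c` of an antisymmetric matrix `B`, i.e. the unique `c` with `c × a = B a`. -/
def axial (B : Matrix (Fin 3) (Fin 3) ℝ) : V3 := ![B 2 1, B 0 2, B 1 0]

/-- surface curl: the unique vector with `(curlS w) × a = (∇s w − (∇s w)ᵀ) a` for all `a`. -/
def curlS (φ : ℝ × ℝ → V3) (w : ℝ × ℝ → V3) (p : ℝ × ℝ) : V3 :=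
  axial (gradSv φ w p - (gradSv φ w p).transpose)

def ndir (φ : ℝ × ℝ → V3) (α : ℝ × ℝ → ℝ) (p : ℝ × ℝ) : V3 :=
  Real.cos (α p) • e1 φ p + Real.sin (α p) • e2 φ p
def tdir (φ : ℝ × ℝ → V3) (α : ℝ × ℝ → ℝ) (p : ℝ × ℝ) : V3 := cross3 (nuv φ p) (ndir φ α p)

def kap1 (φ : ℝ × ℝ → V3) (p : ℝ × ℝ) : ℝ :=
  -(pv (Efun φ) p) / (2 * Efun φ p * Real.sqrt (Gfun φ p))
def kap2 (φ : ℝ × ℝ → V3) (p : ℝ × ℝ) : ℝ :=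
  pu (Gfun φ) p / (2 * Gfun φ p * Real.sqrt (Efun φ p))

def cN (c₁ c₂ : ℝ × ℝ → ℝ) (α : ℝ × ℝ → ℝ) (p : ℝ × ℝ) : ℝ :=
  c₁ p * Real.cos (α p) ^ 2 + c₂ p * Real.sin (α p) ^ 2
def cT (c₁ c₂ : ℝ × ℝ → ℝ) (α : ℝ × ℝ → ℝ) (p : ℝ × ℝ) : ℝ :=
  c₁ p * Real.sin (α p) ^ 2 + c₂ p * Real.cos (α p) ^ 2
def tauG (c₁ c₂ : ℝ × ℝ → ℝ) (α : ℝ × ℝ → ℝ) (p : ℝ × ℝ) : ℝ :=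
  (c₁ p - c₂ p) * Real.sin (α p) * Real.cos (α p)
def kN (φ : ℝ × ℝ → V3) (α : ℝ × ℝ → ℝ) (p : ℝ × ℝ) : ℝ :=
  dot3 (gradS φ α p) (ndir φ α p) + kap1 φ p * Real.cos (α p) + kap2 φ p * Real.sin (α p)
def kT (φ : ℝ × ℝ → V3) (α : ℝ × ℝ → ℝ) (p : ℝ × ℝ) : ℝ :=
  dot3 (gradS φ α p) (tdir φ α p) - kap1 φ p * Real.sin (α p) + kap2 φ p * Real.cos (α p)

/-- the curvature tensor `L = c₁ e₁⊗e₁ + c₂ e₂⊗e₂`. -/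
def Lcurv (φ : ℝ × ℝ → V3) (c₁ c₂ : ℝ × ℝ → ℝ) (p : ℝ × ℝ) : Matrix (Fin 3) (Fin 3) ℝ :=
  c₁ p • tensor3 (e1 φ p) (e1 φ p) + c₂ p • tensor3 (e2 φ p) (e2 φ p)

/-- the shell parameterization. -/
def PhiMap (φ : ℝ × ℝ → V3) (x : (ℝ × ℝ) × ℝ) : V3 := φ x.1 + x.2 • nuv φ x.1

/-- Cartesian partial derivative on `ℝ³`. -/
def pd (i : Fin 3) {X : Type} [NormedAddCommGroup X] [NormedSpace ℝ X] (f : V3 → X) (x : V3) : X :=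
  fderiv ℝ f x (Pi.single i 1)

def div3 (w : V3 → V3) (x : V3) : ℝ := ∑ i, pd i w x i
def curl3 (w : V3 → V3) (x : V3) : V3 :=
  ![pd 1 w x 2 - pd 2 w x 1, pd 2 w x 0 - pd 0 w x 2, pd 0 w x 1 - pd 1 w x 0]
def grad3 (f : V3 → ℝ) (x : V3) : V3 := fun i => pd i f x
def Dmat3 (w : V3 → V3) (x : V3) : Matrix (Fin 3) (Fin 3) ℝ := Matrix.of fun i j => pd j w x i


private lemma alg_expand (a b u : V3) (haa : dot3 a a = 1) (hbb : dot3 b b = 1) (hab : dot3 a b = 0) :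
    u = dot3 u a • a + dot3 u b • b + dot3 u (cross3 a b) • cross3 a b := by
  simp only [dot3, Fin.sum_univ_three] at haa hbb hab
  funext i
  fin_cases i <;>
    simp only [dot3, cross3, tensor3, axial, Matrix.trace, Matrix.diag, Fin.sum_univ_three,
        Matrix.smul_apply, Matrix.add_apply, Matrix.sub_apply, Matrix.transpose_apply,
        Matrix.of_apply, Pi.add_apply, Pi.sub_apply, Pi.smul_apply, Pi.neg_apply, smul_eq_mul,
        Fin.zero_eta, Fin.mk_one, Fin.reduceFinMk, Fin.isValue, Matrix.cons_val_zero,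
        Matrix.cons_val_one, Matrix.head_cons, Matrix.cons_val_two, Matrix.tail_cons]
  · linear_combination (-1*(b 2)^2*(u 0) - 1*(b 1)^2*(u 0) + (b 0)*(b 2)*(u 2) + (b 0)*(b 1)*(u 1)) * haa + (-1*(u 0) + (a 0)*(a 2)*(u 2) + (a 0)*(a 1)*(u 1) + (a 0)^2*(u 0)) * hbb + ((a 2)*(b 2)*(u 0) - 1*(a 2)*(b 0)*(u 2) + (a 1)*(b 1)*(u 0) - 1*(a 1)*(b 0)*(u 1) - 1*(a 0)*(b 2)*(u 2) - 1*(a 0)*(b 1)*(u 1) - 1*(a 0)*(b 0)*(u 0)) * hab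
  · linear_combination (-1*(u 1) + (b 1)*(b 2)*(u 2) + (b 1)^2*(u 1) + (b 0)*(b 1)*(u 0)) * haa + (-1*(a 2)^2*(u 1) + (a 1)*(a 2)*(u 2) + (a 0)*(a 1)*(u 0) - 1*(a 0)^2*(u 1)) * hbb + ((a 2)*(b 2)*(u 1) - 1*(a 2)*(b 1)*(u 2) - 1*(a 1)*(b 2)*(u 2) - 1*(a 1)*(b 1)*(u 1) - 1*(a 1)*(b 0)*(u 0) - 1*(a 0)*(b 1)*(u 0) + (a 0)*(b 0)*(u 1)) * hab
  · linear_combination (-1*(u 2) + (b 2)^2*(u 2) + (b 1)*(b 2)*(u 1) + (b 0)*(b 2)*(u 0)) * haa + ((a 1)*(a 2)*(u 1) - 1*(a 1)^2*(u 2) + (a 0)*(a 2)*(u 0) - 1*(a 0)^2*(u 2)) * hbb + (-1*(a 2)*(b 2)*(u 2) - 1*(a 2)*(b 1)*(u 1) - 1*(a 2)*(b 0)*(u 0) - 1*(a 1)*(b 2)*(u 1) + (a 1)*(b 1)*(u 2) - 1*(a 0)*(b 2)*(u 0) + (a 0)*(b 0)*(u 2)) * hab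

private lemma alg_ht (a b : V3) (co si : ℝ) (haa : dot3 a a = 1) (hbb : dot3 b b = 1) (hab : dot3 a b = 0) :
    cross3 (cross3 a b) (co • a + si • b) = co • b - si • a := by
  simp only [dot3, Fin.sum_univ_three] at haa hbb hab
  funext i
  fin_cases i <;>
    simp only [dot3, cross3, tensor3, axial, Matrix.trace, Matrix.diag, Fin.sum_univ_three,
        Matrix.smul_apply, Matrix.add_apply, Matrix.sub_apply, Matrix.transpose_apply,
        Matrix.of_apply, Pi.add_apply, Pi.sub_apply, Pi.smul_apply, Pi.neg_apply, smul_eq_mul,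
        Fin.zero_eta, Fin.mk_one, Fin.reduceFinMk, Fin.isValue, Matrix.cons_val_zero,
        Matrix.cons_val_one, Matrix.head_cons, Matrix.cons_val_two, Matrix.tail_cons]
  · linear_combination ((b 0)*co) * haa + (-1*(a 0)*si) * hbb + ((b 0)*si - 1*(a 0)*co) * hab
  · linear_combination ((b 1)*co) * haa + (-1*(a 1)*si) * hbb + ((b 1)*si - 1*(a 1)*co) * hab
  · linear_combination ((b 2)*co) * haa + (-1*(a 2)*si) * hbb + ((b 2)*si - 1*(a 2)*co) * hab

private lemma alg1 (a b : V3) (co si P Q c1 c2 : ℝ) (haa : dot3 a a = 1) (hbb : dot3 b b = 1) (hab : dot3 a b = 0) (hcs : si^2 + co^2 = 1) :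
    (-(si*P)) • tensor3 a a + (co*P) • tensor3 b a + (c1*co) • tensor3 (cross3 a b) a +
      ((-(si*Q)) • tensor3 a b + (co*Q) • tensor3 b b + (c2*si) • tensor3 (cross3 a b) b) =
      (P*co+Q*si) • tensor3 (co • b - si • a) (co • a + si • b) +
        (Q*co-P*si) • tensor3 (co • b - si • a) (co • b - si • a) +
        (c1*co^2+c2*si^2) • tensor3 (cross3 a b) (co • a + si • b) -
        ((c1-c2)*si*co) • tensor3 (cross3 a b) (co • b - si • a) := by
  simp only [dot3, Fin.sum_univ_three] at haa hbb hab
  ext i j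
  fin_cases i <;> fin_cases j <;>
    simp only [dot3, cross3, tensor3, axial, Matrix.trace, Matrix.diag, Fin.sum_univ_three,
        Matrix.smul_apply, Matrix.add_apply, Matrix.sub_apply, Matrix.transpose_apply,
        Matrix.of_apply, Pi.add_apply, Pi.sub_apply, Pi.smul_apply, Pi.neg_apply, smul_eq_mul,
        Fin.zero_eta, Fin.mk_one, Fin.reduceFinMk, Fin.isValue, Matrix.cons_val_zero,
        Matrix.cons_val_one, Matrix.head_cons, Matrix.cons_val_two, Matrix.tail_cons]
  · linear_combination (-1*si*P + si*co^2*P + si^3*P) * haa + (co*Q - 1*co^3*Q - 1*si^2*co*Q) * hbb + (co*P - 1*co^3*P - 1*si*Q + si*co^2*Q - 1*si^2*co*P + si^3*Q) * hab + (-1*co*Q + si*P + (b 2)^2*co*Q + (b 1)^2*co*Q + (a 2)*(b 2)*co*P - 1*(a 2)*(b 2)*si*Q + (a 2)*(b 0)*(b 1)*si*c2 - 1*(a 2)^2*si*P + (a 1)*(b 1)*co*P - 1*(a 1)*(b 1)*si*Q - 1*(a 1)*(b 0)*(b 2)*si*c2 - 1*(a 1)^2*si*P + (a 0)*(a 2)*(b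 1)*co*c1 - 1*(a 0)*(a 1)*(b 2)*co*c1) * hcs
  · linear_combination (-1*(b 0)*(b 1)*co*Q + (a 2)*(b 1)^2*si*c2 - 1*(a 1)*(b 1)*(b 2)*si*c2 - 1*(a 1)*(b 0)*co*P + (a 1)*(a 2)*(b 1)*co*c1 - 1*(a 1)^2*(b 2)*co*c1 + (a 0)*(b 1)*si*Q + (a 0)*(a 1)*si*P) * hcs
  · linear_combination (-1*(b 0)*(b 2)*co*Q + (a 2)*(b 1)*(b 2)*si*c2 - 1*(a 2)*(b 0)*co*P + (a 2)^2*(b 1)*co*c1 - 1*(a 1)*(b 2)^2*si*c2 - 1*(a 1)*(a 2)*(b 2)*co*c1 + (a 0)*(b 2)*si*Q + (a 0)*(a 2)*si*P) * hcs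
  · linear_combination (-1*(b 2)*co*c1 + (b 2)*co^3*c1 + (b 2)*si^2*co*c1) * haa + ((a 2)*si*c2 - 1*(a 2)*si*co^2*c2 - 1*(a 2)*si^3*c2) * hbb + (-1*(b 2)*si*c2 + (b 2)*si*co^2*c2 + (b 2)*si^3*c2 + (a 2)*co*c1 - 1*(a 2)*co^3*c1 - 1*(a 2)*si^2*co*c1) * hab + ((b 2)*co*c1 - 1*(b 0)*(b 1)*co*Q - 1*(a 2)*si*c2 + (a 2)*(b 1)^2*si*c2 - 1*(a 1)*(b 1)*(b 2)*si*c2 + (a 1)*(b 0)*si*Q + (a 1)*(a 2)*(b 1)*co*c1 - 1*(a 1)^2*(b 2)*co*c1 - 1*(a 0)*(b 1)*co*P + (a 0)*(a 1)*si*P) * hcs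
  · linear_combination (-1*(b 1)^2*co*Q - 1*(a 2)*(b 0)*(b 1)*si*c2 - 1*(a 1)*(b 1)*co*P + (a 1)*(b 1)*si*Q - 1*(a 1)*(a 2)*(b 0)*co*c1 + (a 1)^2*si*P + (a 0)*(b 1)*(b 2)*si*c2 + (a 0)*(a 1)*(b 2)*co*c1) * hcs
  · linear_combination (-1*(b 1)*(b 2)*co*Q - 1*(a 2)*(b 1)*co*P - 1*(a 2)*(b 0)*(b 2)*si*c2 - 1*(a 2)^2*(b 0)*co*c1 + (a 1)*(b 2)*si*Q + (a 1)*(a 2)*si*P + (a 0)*(b 2)^2*si*c2 + (a 0)*(a 2)*(b 2)*co*c1) * hcs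
  · linear_combination ((b 1)*co*c1 - 1*(b 1)*co^3*c1 - 1*(b 1)*si^2*co*c1) * haa + (-1*(a 1)*si*c2 + (a 1)*si*co^2*c2 + (a 1)*si^3*c2) * hbb + ((b 1)*si*c2 - 1*(b 1)*si*co^2*c2 - 1*(b 1)*si^3*c2 - 1*(a 1)*co*c1 + (a 1)*co^3*c1 + (a 1)*si^2*co*c1) * hab + (-1*(b 1)*co*c1 - 1*(b 0)*(b 2)*co*Q + (a 2)*(b 1)*(b 2)*si*c2 + (a 2)*(b 0)*si*Q + (a 2)^2*(b 1)*co*c1 + (a 1)*si*c2 - 1*(a 1)*(b 2)^2*si*c2 - 1*(a 1)*(a 2)*(b 2)*co*c1 - 1*(a 0)*(b 2)*co*P + (a 0)*(a 2)*si*P) * hcs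
  · linear_combination (-1*(b 1)*(b 2)*co*Q + (a 2)*(b 1)*si*Q - 1*(a 1)*(b 2)*co*P + (a 1)*(b 0)*(b 1)*si*c2 + (a 1)*(a 2)*si*P + (a 1)^2*(b 0)*co*c1 - 1*(a 0)*(b 1)^2*si*c2 - 1*(a 0)*(a 1)*(b 1)*co*c1) * hcs
  · linear_combination (-1*(b 2)^2*co*Q - 1*(a 2)*(b 2)*co*P + (a 2)*(b 2)*si*Q + (a 2)^2*si*P + (a 1)*(b 0)*(b 2)*si*c2 + (a 1)*(a 2)*(b 0)*co*c1 - 1*(a 0)*(b 1)*(b 2)*si*c2 - 1*(a 0)*(a 2)*(b 1)*co*c1) * hcs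

private lemma alg2 (a b : V3) (co si x y z w : ℝ) (haa : dot3 a a = 1) (hbb : dot3 b b = 1) (hab : dot3 a b = 0) (hcs : si^2 + co^2 = 1) :
    Matrix.trace (x • tensor3 (co • b - si • a) (co • a + si • b) +
        y • tensor3 (co • b - si • a) (co • b - si • a) +
        z • tensor3 (cross3 a b) (co • a + si • b) -
        w • tensor3 (cross3 a b) (co • b - si • a)) = y := by
  simp only [dot3, Fin.sum_univ_three] at haa hbb hab
  simp only [dot3, cross3, tensor3, axial, Matrix.trace, Matrix.diag, Fin.sum_univ_three,
      Matrix.smul_apply, Matrix.add_apply, Matrix.sub_apply, Matrix.transpose_apply,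
      Matrix.of_apply, Pi.add_apply, Pi.sub_apply, Pi.smul_apply, Pi.neg_apply, smul_eq_mul,
      Fin.zero_eta, Fin.mk_one, Fin.reduceFinMk, Fin.isValue, Matrix.cons_val_zero,
      Matrix.cons_val_one, Matrix.head_cons, Matrix.cons_val_two, Matrix.tail_cons]
  linear_combination (-1*si*co*x + si^2*y) * haa + (co^2*y + si*co*x) * hbb + (co^2*x - 2*si*co*y - 1*si^2*x) * hab + (y) * hcs

private lemma alg3 (a b : V3) (co si x y z w : ℝ) (haa : dot3 a a = 1) (hbb : dot3 b b = 1) (hab : dot3 a b = 0) (hcs : si^2 + co^2 = 1) :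
    axial ((x • tensor3 (co • b - si • a) (co • a + si • b) +
        y • tensor3 (co • b - si • a) (co • b - si • a) +
        z • tensor3 (cross3 a b) (co • a + si • b) -
        w • tensor3 (cross3 a b) (co • b - si • a)) - (x • tensor3 (co • b - si • a) (co • a + si • b) +
        y • tensor3 (co • b - si • a) (co • b - si • a) +
        z • tensor3 (cross3 a b) (co • a + si • b) -
        w • tensor3 (cross3 a b) (co • b - si • a)).transpose) =
      (-w) • (co • a + si • b) - z • (co • b - si • a) + x • cross3 a b := by
  simp only [dot3, Fin.sum_univ_three] at haa hbb hab
  funext i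
  fin_cases i <;>
    simp only [dot3, cross3, tensor3, axial, Matrix.trace, Matrix.diag, Fin.sum_univ_three,
        Matrix.smul_apply, Matrix.add_apply, Matrix.sub_apply, Matrix.transpose_apply,
        Matrix.of_apply, Pi.add_apply, Pi.sub_apply, Pi.smul_apply, Pi.neg_apply, smul_eq_mul,
        Fin.zero_eta, Fin.mk_one, Fin.reduceFinMk, Fin.isValue, Matrix.cons_val_zero,
        Matrix.cons_val_one, Matrix.head_cons, Matrix.cons_val_two, Matrix.tail_cons]
  · linear_combination (-1*(b 0)*co*z - 1*(b 0)*si*w) * haa + (-1*(a 0)*co*w + (a 0)*si*z) * hbb + ((b 0)*co*w - 1*(b 0)*si*z + (a 0)*co*z + (a 0)*si*w) * hab + (-1*(a 2)*(b 1)*x + (a 1)*(b 2)*x) * hcs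
  · linear_combination (-1*(b 1)*co*z - 1*(b 1)*si*w) * haa + (-1*(a 1)*co*w + (a 1)*si*z) * hbb + ((b 1)*co*w - 1*(b 1)*si*z + (a 1)*co*z + (a 1)*si*w) * hab + ((a 2)*(b 0)*x - 1*(a 0)*(b 2)*x) * hcs
  · linear_combination (-1*(b 2)*co*z - 1*(b 2)*si*w) * haa + (-1*(a 2)*co*w + (a 2)*si*z) * hbb + ((b 2)*co*w - 1*(b 2)*si*z + (a 2)*co*z + (a 2)*si*w) * hab + (-1*(a 1)*(b 0)*x + (a 0)*(b 1)*x) * hcs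

private lemma alg4 (a b : V3) (co si x y z : ℝ) (haa : dot3 a a = 1) (hbb : dot3 b b = 1) (hab : dot3 a b = 0) (hcs : si^2 + co^2 = 1) :
    dot3 (co • a + si • b) (x • (co • a + si • b) - y • (co • b - si • a) + z • cross3 a b) = x := by
  simp only [dot3, Fin.sum_univ_three] at haa hbb hab
  simp only [dot3, cross3, tensor3, axial, Matrix.trace, Matrix.diag, Fin.sum_univ_three,
      Matrix.smul_apply, Matrix.add_apply, Matrix.sub_apply, Matrix.transpose_apply,
      Matrix.of_apply, Pi.add_apply, Pi.sub_apply, Pi.smul_apply, Pi.neg_apply, smul_eq_mul,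
      Fin.zero_eta, Fin.mk_one, Fin.reduceFinMk, Fin.isValue, Matrix.cons_val_zero,
      Matrix.cons_val_one, Matrix.head_cons, Matrix.cons_val_two, Matrix.tail_cons]
  linear_combination (co^2*x + si*co*y) * haa + (-1*si*co*y + si^2*x) * hbb + (-1*co^2*y + 2*si*co*x + si^2*y) * hab + (x) * hcs

private lemma alg5 (a b : V3) (co si x y z : ℝ) (haa : dot3 a a = 1) (hbb : dot3 b b = 1) (hab : dot3 a b = 0) (hcs : si^2 + co^2 = 1) :
    cross3 (co • a + si • b) (x • (co • a + si • b) - y • (co • b - si • a) + z • cross3 a b) =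
      (-y) • cross3 a b - z • (co • b - si • a) := by
  simp only [dot3, Fin.sum_univ_three] at haa hbb hab
  funext i
  fin_cases i <;>
    simp only [dot3, cross3, tensor3, axial, Matrix.trace, Matrix.diag, Fin.sum_univ_three,
        Matrix.smul_apply, Matrix.add_apply, Matrix.sub_apply, Matrix.transpose_apply,
        Matrix.of_apply, Pi.add_apply, Pi.sub_apply, Pi.smul_apply, Pi.neg_apply, smul_eq_mul,
        Fin.zero_eta, Fin.mk_one, Fin.reduceFinMk, Fin.isValue, Matrix.cons_val_zero,
        Matrix.cons_val_one, Matrix.head_cons, Matrix.cons_val_two, Matrix.tail_cons]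
  · linear_combination (-1*(b 0)*co*z) * haa + ((a 0)*si*z) * hbb + (-1*(b 0)*si*z + (a 0)*co*z) * hab + ((a 2)*(b 1)*y - 1*(a 1)*(b 2)*y) * hcs
  · linear_combination (-1*(b 1)*co*z) * haa + ((a 1)*si*z) * hbb + (-1*(b 1)*si*z + (a 1)*co*z) * hab + (-1*(a 2)*(b 0)*y + (a 0)*(b 2)*y) * hcs
  · linear_combination (-1*(b 2)*co*z) * haa + ((a 2)*si*z) * hbb + (-1*(b 2)*si*z + (a 2)*co*z) * hab + ((a 1)*(b 0)*y - 1*(a 0)*(b 1)*y) * hcs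

private lemma alg6 (a b : V3) (co si y z : ℝ) (haa : dot3 a a = 1) (hbb : dot3 b b = 1) (hab : dot3 a b = 0) (hcs : si^2 + co^2 = 1) :
    dot3 ((-y) • cross3 a b - z • (co • b - si • a)) ((-y) • cross3 a b - z • (co • b - si • a)) =
      y^2 + z^2 := by
  simp only [dot3, Fin.sum_univ_three] at haa hbb hab
  simp only [dot3, cross3, tensor3, axial, Matrix.trace, Matrix.diag, Fin.sum_univ_three,
      Matrix.smul_apply, Matrix.add_apply, Matrix.sub_apply, Matrix.transpose_apply,
      Matrix.of_apply, Pi.add_apply, Pi.sub_apply, Pi.smul_apply, Pi.neg_apply, smul_eq_mul,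
      Fin.zero_eta, Fin.mk_one, Fin.reduceFinMk, Fin.isValue, Matrix.cons_val_zero,
      Matrix.cons_val_one, Matrix.head_cons, Matrix.cons_val_two, Matrix.tail_cons]
  linear_combination (y^2 + si^2*z^2) * haa + (co^2*z^2 + (a 2)^2*y^2 + (a 1)^2*y^2 + (a 0)^2*y^2) * hbb + (-2*si*co*z^2 - 1*(a 2)*(b 2)*y^2 - 1*(a 1)*(b 1)*y^2 - 1*(a 0)*(b 0)*y^2) * hab + (z^2) * hcs

private lemma dot3_comm (u v : V3) : dot3 u v = dot3 v u := by
  simp only [dot3, Fin.sum_univ_three]; ring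
private lemma dot3_smul_left (c : ℝ) (u v : V3) : dot3 (c • u) v = c * dot3 u v := by
  simp only [dot3, Fin.sum_univ_three, Pi.smul_apply, smul_eq_mul]; ring
private lemma dot3_smul_right (c : ℝ) (u v : V3) : dot3 u (c • v) = c * dot3 u v := by
  simp only [dot3, Fin.sum_univ_three, Pi.smul_apply, smul_eq_mul]; ring
private lemma dot3_cross_left (u v : V3) : dot3 u (cross3 u v) = 0 := by
  simp only [dot3, cross3, Fin.sum_univ_three, Matrix.cons_val_zero, Matrix.cons_val_one,
    Matrix.head_cons, Matrix.cons_val_two, Matrix.tail_cons]; ring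
private lemma dot3_cross_right (u v : V3) : dot3 v (cross3 u v) = 0 := by
  simp only [dot3, cross3, Fin.sum_univ_three, Matrix.cons_val_zero, Matrix.cons_val_one,
    Matrix.head_cons, Matrix.cons_val_two, Matrix.tail_cons]; ring

private lemma hasFDeriv_comp3 {f : ℝ × ℝ → V3} {q : ℝ × ℝ} (hf : DifferentiableAt ℝ f q)
    (i : Fin 3) :
    HasFDerivAt (fun x => f x i)
      ((ContinuousLinearMap.proj i : V3 →L[ℝ] ℝ).comp (fderiv ℝ f q)) q :=
  (ContinuousLinearMap.proj i : V3 →L[ℝ] ℝ).hasFDerivAt.comp q hf.hasFDerivAt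

private lemma diff_comp3 {f : ℝ × ℝ → V3} {q : ℝ × ℝ} (hf : DifferentiableAt ℝ f q) (i : Fin 3) :
    DifferentiableAt ℝ (fun x => f x i) q :=
  (hasFDeriv_comp3 hf i).differentiableAt

private lemma fderiv_dot3_apply {f g : ℝ × ℝ → V3} {q : ℝ × ℝ} (v : ℝ × ℝ)
    (hf : DifferentiableAt ℝ f q) (hg : DifferentiableAt ℝ g q) :
    fderiv ℝ (fun x => dot3 (f x) (g x)) q v =
      dot3 (fderiv ℝ f q v) (g q) + dot3 (f q) (fderiv ℝ g q v) := by
  have h : HasFDerivAt (fun x => dot3 (f x) (g x))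
      (∑ i : Fin 3, (f q i • (ContinuousLinearMap.proj i : V3 →L[ℝ] ℝ).comp (fderiv ℝ g q)
        + g q i • (ContinuousLinearMap.proj i : V3 →L[ℝ] ℝ).comp (fderiv ℝ f q))) q := by
    have h2 : ∀ i ∈ (Finset.univ : Finset (Fin 3)), HasFDerivAt (fun x => f x i * g x i)
        (f q i • (ContinuousLinearMap.proj i : V3 →L[ℝ] ℝ).comp (fderiv ℝ g q)
          + g q i • (ContinuousLinearMap.proj i : V3 →L[ℝ] ℝ).comp (fderiv ℝ f q)) q :=
      fun i _ => (hasFDeriv_comp3 hf i).mul (hasFDeriv_comp3 hg i)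
    exact HasFDerivAt.sum h2
  rw [h.fderiv]
  simp only [ContinuousLinearMap.coe_sum', Finset.sum_apply, ContinuousLinearMap.add_apply,
    ContinuousLinearMap.coe_smul', Pi.smul_apply, ContinuousLinearMap.coe_comp', Function.comp,
    ContinuousLinearMap.proj_apply, smul_eq_mul, dot3, Fin.sum_univ_three]
  ring

private lemma fderiv_smulV {h : ℝ × ℝ → ℝ} {f : ℝ × ℝ → V3} {q : ℝ × ℝ} (v : ℝ × ℝ)
    (hh : DifferentiableAt ℝ h q) (hf : DifferentiableAt ℝ f q) :
    fderiv ℝ (fun x => h x • f x) q v = fderiv ℝ h q v • f q + h q • fderiv ℝ f q v := by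
  rw [show (fun x => h x • f x) = h • f from rfl, (hh.hasFDerivAt.smul hf.hasFDerivAt).fderiv]
  simp only [ContinuousLinearMap.add_apply, ContinuousLinearMap.smul_apply,
    ContinuousLinearMap.smulRight_apply]
  rw [add_comm]

private lemma fderiv_addV {f g : ℝ × ℝ → V3} {q : ℝ × ℝ} (v : ℝ × ℝ)
    (hf : DifferentiableAt ℝ f q) (hg : DifferentiableAt ℝ g q) :
    fderiv ℝ (fun x => f x + g x) q v = fderiv ℝ f q v + fderiv ℝ g q v := by
  rw [fderiv_fun_add hf hg]; rfl

private lemma fderiv_cos_comp {α : ℝ × ℝ → ℝ} {q : ℝ × ℝ} (v : ℝ × ℝ)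
    (hα : DifferentiableAt ℝ α q) :
    fderiv ℝ (fun x => Real.cos (α x)) q v = -Real.sin (α q) * fderiv ℝ α q v := by
  have h : HasFDerivAt (fun x => Real.cos (α x)) (-Real.sin (α q) • fderiv ℝ α q) q :=
    (Real.hasDerivAt_cos (α q)).comp_hasFDerivAt q hα.hasFDerivAt
  rw [h.fderiv]; simp

private lemma fderiv_sin_comp {α : ℝ × ℝ → ℝ} {q : ℝ × ℝ} (v : ℝ × ℝ)
    (hα : DifferentiableAt ℝ α q) :
    fderiv ℝ (fun x => Real.sin (α x)) q v = Real.cos (α q) * fderiv ℝ α q v := by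
  have h : HasFDerivAt (fun x => Real.sin (α x)) (Real.cos (α q) • fderiv ℝ α q) q :=
    (Real.hasDerivAt_sin (α q)).comp_hasFDerivAt q hα.hasFDerivAt
  rw [h.fderiv]; simp

private lemma fderiv_constOn {F : ℝ × ℝ → ℝ} {U : Set (ℝ × ℝ)} (hU : IsOpen U) {p : ℝ × ℝ}
    (hp : p ∈ U) {c : ℝ} (h : ∀ q ∈ U, F q = c) (v : ℝ × ℝ) : fderiv ℝ F p v = 0 := by
  have he : F =ᶠ[nhds p] (fun _ => c) := Filter.eventuallyEq_of_mem (hU.mem_nhds hp) h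
  rw [he.fderiv_eq, fderiv_fun_const]; rfl

private lemma diff_cross3 {f g : ℝ × ℝ → V3} {q : ℝ × ℝ} (hf : DifferentiableAt ℝ f q)
    (hg : DifferentiableAt ℝ g q) : DifferentiableAt ℝ (fun x => cross3 (f x) (g x)) q := by
  have c : ∀ (i j : Fin 3), DifferentiableAt ℝ (fun x => f x i * g x j - f x j * g x i) q :=
    fun i j => ((diff_comp3 hf i).mul (diff_comp3 hg j)).sub ((diff_comp3 hf j).mul (diff_comp3 hg i))
  apply differentiableAt_pi.2
  intro i
  fin_cases i
  · exact c 1 2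
  · exact c 2 0
  · exact c 0 1

private lemma dot3_add_left (u v z : V3) : dot3 (u + v) z = dot3 u z + dot3 v z := by
  simp only [dot3, Fin.sum_univ_three, Pi.add_apply]; ring

private lemma dot3_lin (a b : V3) (x y c d : ℝ) :
    dot3 (x • a + y • b) (c • a + d • b) =
      x*c*dot3 a a + (x*d + y*c)*dot3 a b + y*d*dot3 b b := by
  simp only [dot3, Fin.sum_univ_three, Pi.add_apply, Pi.smul_apply, smul_eq_mul]; ring

private lemma dot3_lin2 (a b : V3) (x y c d : ℝ) :
    dot3 (x • a + y • b) (c • b - d • a) =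
      -(x*d)*dot3 a a + (x*c - y*d)*dot3 a b + y*c*dot3 b b := by
  simp only [dot3, Fin.sum_univ_three, Pi.add_apply, Pi.sub_apply, Pi.smul_apply, smul_eq_mul]
  ring

private lemma smul_tensor_combo (v a b nv : V3) (s x y z : ℝ) (hs : s ≠ 0) :
    s⁻¹ • tensor3 ((s*x) • a + (s*y) • b + (s*z) • nv) v =
      x • tensor3 a v + y • tensor3 b v + z • tensor3 nv v := by
  ext i j
  simp only [tensor3, Matrix.smul_apply, Matrix.add_apply, Matrix.of_apply, Pi.add_apply,
    Pi.smul_apply, smul_eq_mul]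
  field_simp

/-- The surface gradient of the tangent director decomposes as
`∇_s n = κ_n t⊗n + κ_t t⊗t + c_n ν⊗n − τ ν⊗t`; consequently `div_s n = κ_t`,
`curl_s n = −τ n − c_n t + κ_n ν`, `n·curl_s n = −τ`, `n × curl_s n = −c_n ν − κ_n t`
and `|n × curl_s n|² = c_n² + κ_n²`. -/
theorem surface_gradient_of_director
    (U : Set (ℝ × ℝ)) (hU : IsOpen U)
    (φ : ℝ × ℝ → V3) (hφ : ContDiffOn ℝ (⊤ : ℕ∞) φ U)
    (hEpos : ∀ p ∈ U, 0 < Efun φ p) (hGpos : ∀ p ∈ U, 0 < Gfun φ p)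
    (horth : ∀ p ∈ U, dot3 (pu φ p) (pv φ p) = 0)
    (c₁ c₂ : ℝ × ℝ → ℝ) (hc₁ : ContDiffOn ℝ (⊤ : ℕ∞) c₁ U) (hc₂ : ContDiffOn ℝ (⊤ : ℕ∞) c₂ U)
    (hcurv : ∀ p ∈ U, pu (nuv φ) p = (-c₁ p) • pu φ p ∧ pv (nuv φ) p = (-c₂ p) • pv φ p)
    (α : ℝ × ℝ → ℝ) (hα : ContDiffOn ℝ (⊤ : ℕ∞) α U) :
    ∀ p ∈ U,
      gradSv φ (ndir φ α) p =
          kN φ α p • tensor3 (tdir φ α p) (ndir φ α p) +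
            kT φ α p • tensor3 (tdir φ α p) (tdir φ α p) +
            cN c₁ c₂ α p • tensor3 (nuv φ p) (ndir φ α p) -
            tauG c₁ c₂ α p • tensor3 (nuv φ p) (tdir φ α p) ∧
        divS φ (ndir φ α) p = kT φ α p ∧
        curlS φ (ndir φ α) p =
          (-tauG c₁ c₂ α p) • ndir φ α p - cN c₁ c₂ α p • tdir φ α p + kN φ α p • nuv φ p ∧
        dot3 (ndir φ α p) (curlS φ (ndir φ α) p) = -tauG c₁ c₂ α p ∧
        cross3 (ndir φ α p) (curlS φ (ndir φ α) p) =
          (-cN c₁ c₂ α p) • nuv φ p - kN φ α p • tdir φ α p ∧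
        dot3 (cross3 (ndir φ α p) (curlS φ (ndir φ α) p))
            (cross3 (ndir φ α p) (curlS φ (ndir φ α) p)) =
          (cN c₁ c₂ α p) ^ 2 + (kN φ α p) ^ 2 := by
  intro p hp
  have hpU : U ∈ nhds p := hU.mem_nhds hp
  have hE := hEpos p hp
  have hG := hGpos p hp
  have hsne : Real.sqrt (Efun φ p) ≠ 0 := (Real.sqrt_pos.2 hE).ne'
  have hrne : Real.sqrt (Gfun φ p) ≠ 0 := (Real.sqrt_pos.2 hG).ne'
  have hss : Real.sqrt (Efun φ p) * Real.sqrt (Efun φ p) = Efun φ p := Real.mul_self_sqrt hE.le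
  have hrr : Real.sqrt (Gfun φ p) * Real.sqrt (Gfun φ p) = Gfun φ p := Real.mul_self_sqrt hG.le
  -- smoothness / differentiability
  have hφ3 : ContDiffOn ℝ 3 φ U := hφ.of_le (by exact WithTop.coe_le_coe.2 (le_top : (3:ℕ∞) ≤ ⊤))
  have hDC : ContDiffOn ℝ 2 (fun q => fderiv ℝ φ q) U := hφ3.fderiv_of_isOpen hU (by norm_num)
  have hwC : ContDiffOn ℝ 2 (pu φ) U := hDC.clm_apply contDiffOn_const
  have hzC : ContDiffOn ℝ 2 (pv φ) U := hDC.clm_apply contDiffOn_const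
  have hwcomp : ∀ i : Fin 3, ContDiffOn ℝ 2 (fun q => pu φ q i) U := fun i =>
    (ContinuousLinearMap.proj i : V3 →L[ℝ] ℝ).contDiff.comp_contDiffOn hwC
  have hzcomp : ∀ i : Fin 3, ContDiffOn ℝ 2 (fun q => pv φ q i) U := fun i =>
    (ContinuousLinearMap.proj i : V3 →L[ℝ] ℝ).contDiff.comp_contDiffOn hzC
  have hEC : ContDiffOn ℝ 2 (Efun φ) U :=
    ContDiffOn.sum (s := (Finset.univ : Finset (Fin 3))) (fun i _ => (hwcomp i).mul (hwcomp i))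
  have hGC : ContDiffOn ℝ 2 (Gfun φ) U :=
    ContDiffOn.sum (s := (Finset.univ : Finset (Fin 3))) (fun i _ => (hzcomp i).mul (hzcomp i))
  have hwd : DifferentiableAt ℝ (pu φ) p := (hwC.contDiffAt hpU).differentiableAt (by norm_num)
  have hzd : DifferentiableAt ℝ (pv φ) p := (hzC.contDiffAt hpU).differentiableAt (by norm_num)
  have hsEi : DifferentiableAt ℝ (fun q => (Real.sqrt (Efun φ q))⁻¹) p :=
    ((((hEC.contDiffAt hpU).sqrt hE.ne').inv hsne).differentiableAt (by norm_num))
  have hsGi : DifferentiableAt ℝ (fun q => (Real.sqrt (Gfun φ q))⁻¹) p :=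
    ((((hGC.contDiffAt hpU).sqrt hG.ne').inv hrne).differentiableAt (by norm_num))
  have he1d : DifferentiableAt ℝ (e1 φ) p := hsEi.smul hwd
  have he2d : DifferentiableAt ℝ (e2 φ) p := hsGi.smul hzd
  have hnud : DifferentiableAt ℝ (nuv φ) p := diff_cross3 he1d he2d
  have hαd : DifferentiableAt ℝ α p := (hα.contDiffAt hpU).differentiableAt (by simp)
  have hcosd : DifferentiableAt ℝ (fun q => Real.cos (α q)) p :=
    Real.differentiable_cos.differentiableAt.comp p hαd
  have hsind : DifferentiableAt ℝ (fun q => Real.sin (α q)) p :=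
    Real.differentiable_sin.differentiableAt.comp p hαd
  -- Schwarz symmetry
  have hderAt : DifferentiableAt ℝ (fun q => fderiv ℝ φ q) p :=
    (hDC.contDiffAt hpU).differentiableAt (by norm_num)
  have hsymm : IsSymmSndFDerivAt ℝ φ p :=
    (hφ.contDiffAt hpU).isSymmSndFDerivAt (by simp; exact WithTop.coe_le_coe.2 (le_top : (2:ℕ∞) ≤ ⊤))
  have hswz : pu (pv φ) p = pv (pu φ) p := by
    have key : ∀ u v : ℝ × ℝ, fderiv ℝ (fun q => fderiv ℝ φ q v) p u =
        fderiv ℝ (fderiv ℝ φ) p u v := by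
      intro u v
      have h1 : HasFDerivAt (fun q => fderiv ℝ φ q v)
          ((ContinuousLinearMap.apply ℝ V3 v).comp (fderiv ℝ (fderiv ℝ φ) p)) p :=
        (ContinuousLinearMap.apply ℝ V3 v).hasFDerivAt.comp p hderAt.hasFDerivAt
      rw [h1.fderiv]; rfl
    show fderiv ℝ (fun q => fderiv ℝ φ q (0,1)) p (1,0) =
      fderiv ℝ (fun q => fderiv ℝ φ q (1,0)) p (0,1)
    rw [key, key]
    exact hsymm (1,0) (0,1)
  -- orthonormality on U
  have hone1 : ∀ q ∈ U, dot3 (e1 φ q) (e1 φ q) = 1 := by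
    intro q hq
    have hEq := hEpos q hq
    have h2 : Real.sqrt (Efun φ q) * Real.sqrt (Efun φ q) = Efun φ q := Real.mul_self_sqrt hEq.le
    show dot3 ((Real.sqrt (Efun φ q))⁻¹ • pu φ q) ((Real.sqrt (Efun φ q))⁻¹ • pu φ q) = 1
    rw [dot3_smul_left, dot3_smul_right]
    have h3 : dot3 (pu φ q) (pu φ q) = Efun φ q := rfl
    rw [h3, ← h2]
    field_simp
    rw [Real.sqrt_sq (Real.sqrt_nonneg _)]
  have hone2 : ∀ q ∈ U, dot3 (e2 φ q) (e2 φ q) = 1 := by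
    intro q hq
    have hGq := hGpos q hq
    have h2 : Real.sqrt (Gfun φ q) * Real.sqrt (Gfun φ q) = Gfun φ q := Real.mul_self_sqrt hGq.le
    show dot3 ((Real.sqrt (Gfun φ q))⁻¹ • pv φ q) ((Real.sqrt (Gfun φ q))⁻¹ • pv φ q) = 1
    rw [dot3_smul_left, dot3_smul_right]
    have h3 : dot3 (pv φ q) (pv φ q) = Gfun φ q := rfl
    rw [h3, ← h2]
    field_simp
    rw [Real.sqrt_sq (Real.sqrt_nonneg _)]
  have hone12 : ∀ q ∈ U, dot3 (e1 φ q) (e2 φ q) = 0 := by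
    intro q hq
    show dot3 ((Real.sqrt (Efun φ q))⁻¹ • pu φ q) ((Real.sqrt (Gfun φ q))⁻¹ • pv φ q) = 0
    rw [dot3_smul_left, dot3_smul_right, horth q hq]
    ring
  have haa : dot3 (e1 φ p) (e1 φ p) = 1 := hone1 p hp
  have hbb : dot3 (e2 φ p) (e2 φ p) = 1 := hone2 p hp
  have hab : dot3 (e1 φ p) (e2 φ p) = 0 := hone12 p hp
  have hcs : Real.sin (α p) ^ 2 + Real.cos (α p) ^ 2 = 1 := Real.sin_sq_add_cos_sq (α p)
    -- value facts
  have hwp : pu φ p = Real.sqrt (Efun φ p) • e1 φ p := by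
    show pu φ p = Real.sqrt (Efun φ p) • ((Real.sqrt (Efun φ p))⁻¹ • pu φ p)
    rw [smul_smul, mul_inv_cancel₀ hsne, one_smul]
  have hzp : pv φ p = Real.sqrt (Gfun φ p) • e2 φ p := by
    show pv φ p = Real.sqrt (Gfun φ p) • ((Real.sqrt (Gfun φ p))⁻¹ • pv φ p)
    rw [smul_smul, mul_inv_cancel₀ hrne, one_smul]
  have hnuveq : nuv φ p = cross3 (e1 φ p) (e2 φ p) := rfl
  -- first-order constancy relations
  have d1 : dot3 (fderiv ℝ (e1 φ) p (1, 0)) (e1 φ p) = 0 := by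
    have h0 : fderiv ℝ (fun q => dot3 (e1 φ q) (e1 φ q)) p (1, 0) = 0 :=
      fderiv_constOn hU hp hone1 (1, 0)
    have h1 := fderiv_dot3_apply (f := e1 φ) (g := e1 φ) ((1:ℝ), (0:ℝ)) he1d he1d
    have h2 := dot3_comm (fderiv ℝ (e1 φ) p (1, 0)) (e1 φ p)
    linarith [h1.symm.trans h0]
  have d2 : dot3 (fderiv ℝ (e1 φ) p (0, 1)) (e1 φ p) = 0 := by
    have h0 : fderiv ℝ (fun q => dot3 (e1 φ q) (e1 φ q)) p (0, 1) = 0 :=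
      fderiv_constOn hU hp hone1 (0, 1)
    have h1 := fderiv_dot3_apply (f := e1 φ) (g := e1 φ) ((0:ℝ), (1:ℝ)) he1d he1d
    have h2 := dot3_comm (fderiv ℝ (e1 φ) p (0, 1)) (e1 φ p)
    linarith [h1.symm.trans h0]
  have d3 : dot3 (fderiv ℝ (e2 φ) p (1, 0)) (e2 φ p) = 0 := by
    have h0 : fderiv ℝ (fun q => dot3 (e2 φ q) (e2 φ q)) p (1, 0) = 0 :=
      fderiv_constOn hU hp hone2 (1, 0)
    have h1 := fderiv_dot3_apply (f := e2 φ) (g := e2 φ) ((1:ℝ), (0:ℝ)) he2d he2d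
    have h2 := dot3_comm (fderiv ℝ (e2 φ) p (1, 0)) (e2 φ p)
    linarith [h1.symm.trans h0]
  have d4 : dot3 (fderiv ℝ (e2 φ) p (0, 1)) (e2 φ p) = 0 := by
    have h0 : fderiv ℝ (fun q => dot3 (e2 φ q) (e2 φ q)) p (0, 1) = 0 :=
      fderiv_constOn hU hp hone2 (0, 1)
    have h1 := fderiv_dot3_apply (f := e2 φ) (g := e2 φ) ((0:ℝ), (1:ℝ)) he2d he2d
    have h2 := dot3_comm (fderiv ℝ (e2 φ) p (0, 1)) (e2 φ p)
    linarith [h1.symm.trans h0]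
  -- curvature relations
  have hz1 : ∀ q ∈ U, dot3 (e1 φ q) (nuv φ q) = 0 := fun q _ =>
    dot3_cross_left (e1 φ q) (e2 φ q)
  have hz2 : ∀ q ∈ U, dot3 (e2 φ q) (nuv φ q) = 0 := fun q _ =>
    dot3_cross_right (e1 φ q) (e2 φ q)
  have hcu : fderiv ℝ (nuv φ) p (1, 0) = (-c₁ p) • pu φ p := (hcurv p hp).1
  have hcv : fderiv ℝ (nuv φ) p (0, 1) = (-c₂ p) • pv φ p := (hcurv p hp).2
  have d5 : dot3 (fderiv ℝ (e1 φ) p (1, 0)) (cross3 (e1 φ p) (e2 φ p)) =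
      c₁ p * Real.sqrt (Efun φ p) := by
    have h0 : fderiv ℝ (fun q => dot3 (e1 φ q) (nuv φ q)) p (1, 0) = 0 :=
      fderiv_constOn hU hp hz1 (1, 0)
    have h1 := fderiv_dot3_apply (f := e1 φ) (g := nuv φ) ((1:ℝ), (0:ℝ)) he1d hnud
    have h5 := h1.symm.trans h0
    have h3 : dot3 (e1 φ p) (fderiv ℝ (nuv φ) p (1, 0)) =
        -(c₁ p * Real.sqrt (Efun φ p)) := by
      rw [hcu, dot3_smul_right, hwp, dot3_smul_right, haa]; ring
    rw [hnuveq] at h5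
    linarith [h5, h3]
  have d6 : dot3 (fderiv ℝ (e2 φ) p (1, 0)) (cross3 (e1 φ p) (e2 φ p)) = 0 := by
    have h0 : fderiv ℝ (fun q => dot3 (e2 φ q) (nuv φ q)) p (1, 0) = 0 :=
      fderiv_constOn hU hp hz2 (1, 0)
    have h1 := fderiv_dot3_apply (f := e2 φ) (g := nuv φ) ((1:ℝ), (0:ℝ)) he2d hnud
    have h5 := h1.symm.trans h0
    have h3 : dot3 (e2 φ p) (fderiv ℝ (nuv φ) p (1, 0)) = 0 := by
      rw [hcu, dot3_smul_right, hwp, dot3_smul_right, dot3_comm, hab]; ring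
    rw [hnuveq] at h5
    linarith [h5, h3]
  have d7 : dot3 (fderiv ℝ (e1 φ) p (0, 1)) (cross3 (e1 φ p) (e2 φ p)) = 0 := by
    have h0 : fderiv ℝ (fun q => dot3 (e1 φ q) (nuv φ q)) p (0, 1) = 0 :=
      fderiv_constOn hU hp hz1 (0, 1)
    have h1 := fderiv_dot3_apply (f := e1 φ) (g := nuv φ) ((0:ℝ), (1:ℝ)) he1d hnud
    have h5 := h1.symm.trans h0
    have h3 : dot3 (e1 φ p) (fderiv ℝ (nuv φ) p (0, 1)) = 0 := by
      rw [hcv, dot3_smul_right, hzp, dot3_smul_right, hab]; ring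
    rw [hnuveq] at h5
    linarith [h5, h3]
  have d8 : dot3 (fderiv ℝ (e2 φ) p (0, 1)) (cross3 (e1 φ p) (e2 φ p)) =
      c₂ p * Real.sqrt (Gfun φ p) := by
    have h0 : fderiv ℝ (fun q => dot3 (e2 φ q) (nuv φ q)) p (0, 1) = 0 :=
      fderiv_constOn hU hp hz2 (0, 1)
    have h1 := fderiv_dot3_apply (f := e2 φ) (g := nuv φ) ((0:ℝ), (1:ℝ)) he2d hnud
    have h5 := h1.symm.trans h0
    have h3 : dot3 (e2 φ p) (fderiv ℝ (nuv φ) p (0, 1)) =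
        -(c₂ p * Real.sqrt (Gfun φ p)) := by
      rw [hcv, dot3_smul_right, hzp, dot3_smul_right, hbb]; ring
    rw [hnuveq] at h5
    linarith [h5, h3]
  -- second-derivative identities
  have hEv : pv (Efun φ) p = dot3 (fderiv ℝ (pu φ) p (0, 1)) (pu φ p) +
      dot3 (pu φ p) (fderiv ℝ (pu φ) p (0, 1)) := fderiv_dot3_apply ((0:ℝ), (1:ℝ)) hwd hwd
  have hGu : pu (Gfun φ) p = dot3 (fderiv ℝ (pv φ) p (1, 0)) (pv φ p) +
      dot3 (pv φ p) (fderiv ℝ (pv φ) p (1, 0)) := fderiv_dot3_apply ((1:ℝ), (0:ℝ)) hzd hzd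
  have hor_u : dot3 (fderiv ℝ (pu φ) p (1, 0)) (pv φ p) +
      dot3 (pu φ p) (fderiv ℝ (pv φ) p (1, 0)) = 0 :=
    (fderiv_dot3_apply ((1:ℝ), (0:ℝ)) hwd hzd).symm.trans (fderiv_constOn hU hp horth (1, 0))
  have hor_v : dot3 (fderiv ℝ (pu φ) p (0, 1)) (pv φ p) +
      dot3 (pu φ p) (fderiv ℝ (pv φ) p (0, 1)) = 0 :=
    (fderiv_dot3_apply ((0:ℝ), (1:ℝ)) hwd hzd).symm.trans (fderiv_constOn hU hp horth (0, 1))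
  have hswz' : fderiv ℝ (pv φ) p (1, 0) = fderiv ℝ (pu φ) p (0, 1) := hswz
  have hkey_vE : dot3 (fderiv ℝ (pu φ) p (0, 1)) (pu φ p) = pv (Efun φ) p / 2 := by
    have h2 := dot3_comm (fderiv ℝ (pu φ) p (0, 1)) (pu φ p)
    linarith [hEv]
  have hkey_uG : dot3 (fderiv ℝ (pv φ) p (1, 0)) (pv φ p) = pu (Gfun φ) p / 2 := by
    have h2 := dot3_comm (fderiv ℝ (pv φ) p (1, 0)) (pv φ p)
    linarith [hGu]
  have hkey_uv : dot3 (fderiv ℝ (pu φ) p (1, 0)) (pv φ p) = -(pv (Efun φ) p) / 2 := by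
    rw [hswz'] at hor_u
    have h2 := dot3_comm (fderiv ℝ (pu φ) p (0, 1)) (pu φ p)
    linarith [hor_u, hkey_vE]
  have hkey_vu : dot3 (fderiv ℝ (pv φ) p (0, 1)) (pu φ p) = -(pu (Gfun φ) p) / 2 := by
    rw [← hswz'] at hor_v
    have h2 := dot3_comm (fderiv ℝ (pv φ) p (0, 1)) (pu φ p)
    linarith [hor_v, hkey_uG]
  -- geodesic curvature relations
  have d9 : dot3 (fderiv ℝ (e1 φ) p (1, 0)) (e2 φ p) =
      Real.sqrt (Efun φ p) * kap1 φ p := by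
    have hd : fderiv ℝ (e1 φ) p (1, 0) =
        fderiv ℝ (fun q => (Real.sqrt (Efun φ q))⁻¹) p (1, 0) • pu φ p +
          (Real.sqrt (Efun φ p))⁻¹ • fderiv ℝ (pu φ) p (1, 0) :=
      fderiv_smulV (1, 0) hsEi hwd
    have h1 : dot3 (pu φ p) (e2 φ p) = 0 := by
      rw [hwp, dot3_smul_left, hab, mul_zero]
    have h2 : dot3 (fderiv ℝ (pu φ) p (1, 0)) (e2 φ p) =
        (Real.sqrt (Gfun φ p))⁻¹ * (-(pv (Efun φ) p) / 2) := by
      rw [show e2 φ p = (Real.sqrt (Gfun φ p))⁻¹ • pv φ p from rfl, dot3_smul_right, hkey_uv]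
    rw [hd, dot3_add_left, dot3_smul_left, dot3_smul_left, h1, h2]
    simp only [kap1]
    field_simp
    linear_combination (pv (Efun φ) p) * hss
  have d10 : dot3 (fderiv ℝ (e1 φ) p (0, 1)) (e2 φ p) =
      Real.sqrt (Gfun φ p) * kap2 φ p := by
    have hd : fderiv ℝ (e1 φ) p (0, 1) =
        fderiv ℝ (fun q => (Real.sqrt (Efun φ q))⁻¹) p (0, 1) • pu φ p +
          (Real.sqrt (Efun φ p))⁻¹ • fderiv ℝ (pu φ) p (0, 1) :=
      fderiv_smulV (0, 1) hsEi hwd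
    have h1 : dot3 (pu φ p) (e2 φ p) = 0 := by
      rw [hwp, dot3_smul_left, hab, mul_zero]
    have h2 : dot3 (fderiv ℝ (pu φ) p (0, 1)) (e2 φ p) =
        (Real.sqrt (Gfun φ p))⁻¹ * (pu (Gfun φ) p / 2) := by
      rw [show e2 φ p = (Real.sqrt (Gfun φ p))⁻¹ • pv φ p from rfl, dot3_smul_right,
        ← hswz', hkey_uG]
    rw [hd, dot3_add_left, dot3_smul_left, dot3_smul_left, h1, h2]
    simp only [kap2]
    field_simp
    linear_combination (-pu (Gfun φ) p) * hrr
  have d11 : dot3 (fderiv ℝ (e2 φ) p (1, 0)) (e1 φ p) =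
      -(Real.sqrt (Efun φ p) * kap1 φ p) := by
    have hd : fderiv ℝ (e2 φ) p (1, 0) =
        fderiv ℝ (fun q => (Real.sqrt (Gfun φ q))⁻¹) p (1, 0) • pv φ p +
          (Real.sqrt (Gfun φ p))⁻¹ • fderiv ℝ (pv φ) p (1, 0) :=
      fderiv_smulV (1, 0) hsGi hzd
    have h1 : dot3 (pv φ p) (e1 φ p) = 0 := by
      rw [hzp, dot3_smul_left, dot3_comm, hab, mul_zero]
    have h2 : dot3 (fderiv ℝ (pv φ) p (1, 0)) (e1 φ p) =
        (Real.sqrt (Efun φ p))⁻¹ * (pv (Efun φ) p / 2) := by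
      rw [show e1 φ p = (Real.sqrt (Efun φ p))⁻¹ • pu φ p from rfl, dot3_smul_right,
        hswz', hkey_vE]
    rw [hd, dot3_add_left, dot3_smul_left, dot3_smul_left, h1, h2]
    simp only [kap1]
    field_simp
    linear_combination (-pv (Efun φ) p) * hss
  have d12 : dot3 (fderiv ℝ (e2 φ) p (0, 1)) (e1 φ p) =
      -(Real.sqrt (Gfun φ p) * kap2 φ p) := by
    have hd : fderiv ℝ (e2 φ) p (0, 1) =
        fderiv ℝ (fun q => (Real.sqrt (Gfun φ q))⁻¹) p (0, 1) • pv φ p +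
          (Real.sqrt (Gfun φ p))⁻¹ • fderiv ℝ (pv φ) p (0, 1) :=
      fderiv_smulV (0, 1) hsGi hzd
    have h1 : dot3 (pv φ p) (e1 φ p) = 0 := by
      rw [hzp, dot3_smul_left, dot3_comm, hab, mul_zero]
    have h2 : dot3 (fderiv ℝ (pv φ) p (0, 1)) (e1 φ p) =
        (Real.sqrt (Efun φ p))⁻¹ * (-(pu (Gfun φ) p) / 2) := by
      rw [show e1 φ p = (Real.sqrt (Efun φ p))⁻¹ • pu φ p from rfl, dot3_smul_right, hkey_vu]
    rw [hd, dot3_add_left, dot3_smul_left, dot3_smul_left, h1, h2]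
    simp only [kap2]
    field_simp
    linear_combination (pu (Gfun φ) p) * hrr
  -- frame expansions of the derivatives
  have hexp1 := alg_expand (e1 φ p) (e2 φ p) (fderiv ℝ (e1 φ) p (1, 0)) haa hbb hab
  rw [d1, d9, d5] at hexp1
  have hexp2 := alg_expand (e1 φ p) (e2 φ p) (fderiv ℝ (e2 φ) p (1, 0)) haa hbb hab
  rw [d11, d3, d6] at hexp2
  have hexp3 := alg_expand (e1 φ p) (e2 φ p) (fderiv ℝ (e1 φ) p (0, 1)) haa hbb hab
  rw [d2, d10, d7] at hexp3
  have hexp4 := alg_expand (e1 φ p) (e2 φ p) (fderiv ℝ (e2 φ) p (0, 1)) haa hbb hab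
  rw [d12, d4, d8] at hexp4
  -- derivative of the director
  have hAu : fderiv ℝ (ndir φ α) p (1, 0) =
      (Real.sqrt (Efun φ p) *
        (-(Real.sin (α p) * (fderiv ℝ α p (1, 0) / Real.sqrt (Efun φ p) + kap1 φ p)))) • e1 φ p +
      (Real.sqrt (Efun φ p) *
        (Real.cos (α p) * (fderiv ℝ α p (1, 0) / Real.sqrt (Efun φ p) + kap1 φ p))) • e2 φ p +
      (Real.sqrt (Efun φ p) * (c₁ p * Real.cos (α p))) • cross3 (e1 φ p) (e2 φ p) := by
    have h1 : fderiv ℝ (ndir φ α) p (1, 0) =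
        fderiv ℝ (fun x => Real.cos (α x) • e1 φ x) p (1, 0) +
        fderiv ℝ (fun x => Real.sin (α x) • e2 φ x) p (1, 0) :=
      fderiv_addV (1, 0) (hcosd.smul he1d) (hsind.smul he2d)
    have h2 : fderiv ℝ (fun x => Real.cos (α x) • e1 φ x) p (1, 0) =
        fderiv ℝ (fun x => Real.cos (α x)) p (1, 0) • e1 φ p +
          Real.cos (α p) • fderiv ℝ (e1 φ) p (1, 0) :=
      fderiv_smulV (1, 0) hcosd he1d
    have h3 : fderiv ℝ (fun x => Real.sin (α x) • e2 φ x) p (1, 0) =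
        fderiv ℝ (fun x => Real.sin (α x)) p (1, 0) • e2 φ p +
          Real.sin (α p) • fderiv ℝ (e2 φ) p (1, 0) :=
      fderiv_smulV (1, 0) hsind he2d
    rw [h1, h2, h3, fderiv_cos_comp (1, 0) hαd, fderiv_sin_comp (1, 0) hαd, hexp1, hexp2]
    funext i
    simp only [Pi.add_apply, Pi.smul_apply, smul_eq_mul]
    field_simp
    ring
  have hAv : fderiv ℝ (ndir φ α) p (0, 1) =
      (Real.sqrt (Gfun φ p) *
        (-(Real.sin (α p) * (fderiv ℝ α p (0, 1) / Real.sqrt (Gfun φ p) + kap2 φ p)))) • e1 φ p +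
      (Real.sqrt (Gfun φ p) *
        (Real.cos (α p) * (fderiv ℝ α p (0, 1) / Real.sqrt (Gfun φ p) + kap2 φ p))) • e2 φ p +
      (Real.sqrt (Gfun φ p) * (c₂ p * Real.sin (α p))) • cross3 (e1 φ p) (e2 φ p) := by
    have h1 : fderiv ℝ (ndir φ α) p (0, 1) =
        fderiv ℝ (fun x => Real.cos (α x) • e1 φ x) p (0, 1) +
        fderiv ℝ (fun x => Real.sin (α x) • e2 φ x) p (0, 1) :=
      fderiv_addV (0, 1) (hcosd.smul he1d) (hsind.smul he2d)
    have h2 : fderiv ℝ (fun x => Real.cos (α x) • e1 φ x) p (0, 1) =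
        fderiv ℝ (fun x => Real.cos (α x)) p (0, 1) • e1 φ p +
          Real.cos (α p) • fderiv ℝ (e1 φ) p (0, 1) :=
      fderiv_smulV (0, 1) hcosd he1d
    have h3 : fderiv ℝ (fun x => Real.sin (α x) • e2 φ x) p (0, 1) =
        fderiv ℝ (fun x => Real.sin (α x)) p (0, 1) • e2 φ p +
          Real.sin (α p) • fderiv ℝ (e2 φ) p (0, 1) :=
      fderiv_smulV (0, 1) hsind he2d
    rw [h1, h2, h3, fderiv_cos_comp (0, 1) hαd, fderiv_sin_comp (0, 1) hαd, hexp3, hexp4]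
    funext i
    simp only [Pi.add_apply, Pi.smul_apply, smul_eq_mul]
    field_simp
    ring
  -- scalar curvature rewrites
  have hndir : ndir φ α p = Real.cos (α p) • e1 φ p + Real.sin (α p) • e2 φ p := rfl
  have htdir : tdir φ α p = Real.cos (α p) • e2 φ p - Real.sin (α p) • e1 φ p :=
    alg_ht (e1 φ p) (e2 φ p) (Real.cos (α p)) (Real.sin (α p)) haa hbb hab
  have hcN : cN c₁ c₂ α p = c₁ p * Real.cos (α p) ^ 2 + c₂ p * Real.sin (α p) ^ 2 := rfl
  have htau : tauG c₁ c₂ α p = (c₁ p - c₂ p) * Real.sin (α p) * Real.cos (α p) := rfl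
  have hkN : kN φ α p =
      (fderiv ℝ α p (1, 0) / Real.sqrt (Efun φ p) + kap1 φ p) * Real.cos (α p) +
      (fderiv ℝ α p (0, 1) / Real.sqrt (Gfun φ p) + kap2 φ p) * Real.sin (α p) := by
    have h1 : kN φ α p =
        dot3 ((fderiv ℝ α p (1, 0) / Real.sqrt (Efun φ p)) • e1 φ p +
            (fderiv ℝ α p (0, 1) / Real.sqrt (Gfun φ p)) • e2 φ p)
          (Real.cos (α p) • e1 φ p + Real.sin (α p) • e2 φ p) +
          kap1 φ p * Real.cos (α p) + kap2 φ p * Real.sin (α p) := rfl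
    rw [h1, dot3_lin, haa, hab, hbb]; ring
  have hkT : kT φ α p =
      (fderiv ℝ α p (0, 1) / Real.sqrt (Gfun φ p) + kap2 φ p) * Real.cos (α p) -
      (fderiv ℝ α p (1, 0) / Real.sqrt (Efun φ p) + kap1 φ p) * Real.sin (α p) := by
    have h1 : kT φ α p =
        dot3 ((fderiv ℝ α p (1, 0) / Real.sqrt (Efun φ p)) • e1 φ p +
            (fderiv ℝ α p (0, 1) / Real.sqrt (Gfun φ p)) • e2 φ p) (tdir φ α p) -
          kap1 φ p * Real.sin (α p) + kap2 φ p * Real.cos (α p) := rfl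
    rw [h1, htdir, dot3_lin2, haa, hab, hbb]; ring
  -- assembly
  have hgrad : gradSv φ (ndir φ α) p =
      (Real.sqrt (Efun φ p))⁻¹ • tensor3 (fderiv ℝ (ndir φ α) p (1, 0)) (e1 φ p) +
      (Real.sqrt (Gfun φ p))⁻¹ • tensor3 (fderiv ℝ (ndir φ α) p (0, 1)) (e2 φ p) := rfl
  have hc1 : gradSv φ (ndir φ α) p =
      kN φ α p • tensor3 (tdir φ α p) (ndir φ α p) +
        kT φ α p • tensor3 (tdir φ α p) (tdir φ α p) +
        cN c₁ c₂ α p • tensor3 (nuv φ p) (ndir φ α p) -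
        tauG c₁ c₂ α p • tensor3 (nuv φ p) (tdir φ α p) := by
    rw [hgrad, hAu, hAv, smul_tensor_combo (hs := hsne), smul_tensor_combo (hs := hrne),
      hkN, hkT, hcN, htau, htdir, hndir, hnuveq]
    exact alg1 (e1 φ p) (e2 φ p) (Real.cos (α p)) (Real.sin (α p))
      (fderiv ℝ α p (1, 0) / Real.sqrt (Efun φ p) + kap1 φ p)
      (fderiv ℝ α p (0, 1) / Real.sqrt (Gfun φ p) + kap2 φ p) (c₁ p) (c₂ p) haa hbb hab hcs
  have hc2 : divS φ (ndir φ α) p = kT φ α p := by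
    show Matrix.trace (gradSv φ (ndir φ α) p) = kT φ α p
    rw [hc1, htdir, hndir, hnuveq]
    exact alg2 (e1 φ p) (e2 φ p) (Real.cos (α p)) (Real.sin (α p))
      (kN φ α p) (kT φ α p) (cN c₁ c₂ α p) (tauG c₁ c₂ α p) haa hbb hab hcs
  have hc3 : curlS φ (ndir φ α) p =
      (-tauG c₁ c₂ α p) • ndir φ α p - cN c₁ c₂ α p • tdir φ α p + kN φ α p • nuv φ p := by
    show axial (gradSv φ (ndir φ α) p - (gradSv φ (ndir φ α) p).transpose) = _
    rw [hc1, htdir, hndir, hnuveq]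
    exact alg3 (e1 φ p) (e2 φ p) (Real.cos (α p)) (Real.sin (α p))
      (kN φ α p) (kT φ α p) (cN c₁ c₂ α p) (tauG c₁ c₂ α p) haa hbb hab hcs
  have hc4 : dot3 (ndir φ α p) (curlS φ (ndir φ α) p) = -tauG c₁ c₂ α p := by
    rw [hc3, htdir, hndir, hnuveq]
    exact alg4 (e1 φ p) (e2 φ p) (Real.cos (α p)) (Real.sin (α p))
      (-tauG c₁ c₂ α p) (cN c₁ c₂ α p) (kN φ α p) haa hbb hab hcs
  have hc5 : cross3 (ndir φ α p) (curlS φ (ndir φ α) p) =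
      (-cN c₁ c₂ α p) • nuv φ p - kN φ α p • tdir φ α p := by
    rw [hc3, htdir, hndir, hnuveq]
    exact alg5 (e1 φ p) (e2 φ p) (Real.cos (α p)) (Real.sin (α p))
      (-tauG c₁ c₂ α p) (cN c₁ c₂ α p) (kN φ α p) haa hbb hab hcs
  have hc6 : dot3 (cross3 (ndir φ α p) (curlS φ (ndir φ α) p))
      (cross3 (ndir φ α p) (curlS φ (ndir φ α) p)) =
      (cN c₁ c₂ α p) ^ 2 + (kN φ α p) ^ 2 := by
    rw [hc5, htdir, hnuveq]
    exact alg6 (e1 φ p) (e2 φ p) (Real.cos (α p)) (Real.sin (α p))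
      (cN c₁ c₂ α p) (kN φ α p) haa hbb hab hcs
  exact ⟨hc1, hc2, hc3, hc4, hc5, hc6⟩


end
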